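/- For any matrices M, N ∈ SL(2,ℝ), the quantity ω(M,N) := (−log j(MN,z) + log j(M, Nz) + log j(N,z))/(2πi), where j((a,b;c,d), z) = cz+d, z is any point of the upper half-plane, and log is the principal branch with argument in (−π, π], is independent of z and takes values only in {−1, 0, 1}. -/
import Mathlib

/-- The automorphy factor `j(M, z) = c z + d` for `M = (a, b; c, d)`. -/
noncomputable def jfac (M : Matrix (Fin 2) (Fin 2) ℝ) (z : ℂ) : ℂ :=
  (M 1 0 : ℂ) * z + (M 1 1 : ℂ)

/-- The Möbius action of `M = (a, b; c, d)` on `z`: `(a z + b) / (c z + d)`. -/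
noncomputable def moebius (M : Matrix (Fin 2) (Fin 2) ℝ) (z : ℂ) : ℂ :=
  ((M 0 0 : ℂ) * z + (M 0 1 : ℂ)) / ((M 1 0 : ℂ) * z + (M 1 1 : ℂ))

/-- The phase factor
`ω(M,N) = (−log j(MN,z) + log j(M, Nz) + log j(N,z)) / (2πi)`,
using the principal branch of the complex logarithm. -/
noncomputable def phaseFactor (M N : Matrix (Fin 2) (Fin 2) ℝ) (z : ℂ) : ℂ :=
  (-Complex.log (jfac (M * N) z) + Complex.log (jfac M (moebius N z))
    + Complex.log (jfac N z)) / (2 * Real.pi * Complex.I)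

lemma jfac_im (M : Matrix (Fin 2) (Fin 2) ℝ) (z : ℂ) :
    (jfac M z).im = M 1 0 * z.im := by
  simp [jfac, Complex.add_im, Complex.mul_im]

lemma jfac_ne_zero {M : Matrix (Fin 2) (Fin 2) ℝ} (hM : M.det = 1) {z : ℂ}
    (hz : 0 < z.im) : jfac M z ≠ 0 := by
  rw [Matrix.det_fin_two] at hM
  by_cases hc : M 1 0 = 0
  · have hd : M 1 1 ≠ 0 := by intro h; rw [hc, h] at hM; simp at hM
    simp only [jfac, hc, Complex.ofReal_zero, zero_mul, zero_add]
    exact_mod_cast hd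
  · intro h
    have := congrArg Complex.im h
    rw [jfac_im] at this
    simp only [Complex.zero_im] at this
    rcases mul_eq_zero.1 this with h1 | h1
    · exact hc h1
    · exact hz.ne' h1

lemma moebius_im {N : Matrix (Fin 2) (Fin 2) ℝ} (hN : N.det = 1) (z : ℂ) :
    (moebius N z).im = z.im / Complex.normSq (jfac N z) := by
  rw [Matrix.det_fin_two] at hN
  unfold moebius jfac
  rw [Complex.div_im]
  have h1 : ((N 0 0 : ℂ) * z + (N 0 1 : ℂ)).im = N 0 0 * z.im := by
    simp [Complex.add_im, Complex.mul_im]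
  have h2 : ((N 0 0 : ℂ) * z + (N 0 1 : ℂ)).re = N 0 0 * z.re + N 0 1 := by
    simp [Complex.add_re, Complex.mul_re]
  have h3 : ((N 1 0 : ℂ) * z + (N 1 1 : ℂ)).im = N 1 0 * z.im := by
    simp [Complex.add_im, Complex.mul_im]
  have h4 : ((N 1 0 : ℂ) * z + (N 1 1 : ℂ)).re = N 1 0 * z.re + N 1 1 := by
    simp [Complex.add_re, Complex.mul_re]
  rw [h1, h2, h3, h4, div_sub_div_same]
  congr 1
  linear_combination z.im * hN

lemma moebius_im_pos {N : Matrix (Fin 2) (Fin 2) ℝ} (hN : N.det = 1) {z : ℂ}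
    (hz : 0 < z.im) : 0 < (moebius N z).im := by
  rw [moebius_im hN]
  have h := jfac_ne_zero hN hz
  have : 0 < Complex.normSq (jfac N z) := Complex.normSq_pos.2 h
  positivity

lemma jfac_cocycle (M N : Matrix (Fin 2) (Fin 2) ℝ) {z : ℂ}
    (h : jfac N z ≠ 0) :
    jfac (M * N) z = jfac M (moebius N z) * jfac N z := by
  have hden : ((N 1 0 : ℂ) * z + (N 1 1 : ℂ)) ≠ 0 := h
  simp only [jfac, moebius, Matrix.mul_apply, Fin.sum_univ_two]
  push_cast
  field_simp
  ring

/-- The sum of principal arguments. -/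
noncomputable def argSum (M N : Matrix (Fin 2) (Fin 2) ℝ) (z : ℂ) : ℝ :=
  -(jfac (M * N) z).arg + (jfac M (moebius N z)).arg + (jfac N z).arg

lemma phase_exists_int (M N : Matrix (Fin 2) (Fin 2) ℝ)
    (hM : M.det = 1) (hN : N.det = 1) {z : ℂ} (hz : 0 < z.im) :
    ∃ n : ℤ, phaseFactor M N z = n ∧ (n : ℝ) * (2 * Real.pi) = argSum M N z ∧
      (n = -1 ∨ n = 0 ∨ n = 1) := by
  have hNz : jfac N z ≠ 0 := jfac_ne_zero hN hz
  have hMNz : jfac M (moebius N z) ≠ 0 := jfac_ne_zero hM (moebius_im_pos hN hz)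
  have hMN : (M * N).det = 1 := by rw [Matrix.det_mul, hM, hN, one_mul]
  have hMNz' : jfac (M * N) z ≠ 0 := jfac_ne_zero hMN hz
  set F : ℂ := -Complex.log (jfac (M * N) z) + Complex.log (jfac M (moebius N z))
    + Complex.log (jfac N z) with hF
  have hexp : Complex.exp F = 1 := by
    rw [hF, Complex.exp_add, Complex.exp_add, Complex.exp_neg,
      Complex.exp_log hMNz', Complex.exp_log hMNz, Complex.exp_log hNz,
      jfac_cocycle M N hNz]
    field_simp
  obtain ⟨n, hn⟩ := Complex.exp_eq_one_iff.1 hexp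
  have hpi : (Real.pi : ℂ) ≠ 0 := by exact_mod_cast Real.pi_ne_zero
  have hphase : phaseFactor M N z = n := by
    rw [phaseFactor, ← hF, hn]
    field_simp
  have hIm : F.im = argSum M N z := by
    rw [hF, argSum]
    simp [Complex.log_im]
  have hIm' : (n : ℝ) * (2 * Real.pi) = argSum M N z := by
    rw [← hIm, hn]
    simp [Complex.mul_im, Complex.mul_re]
  refine ⟨n, hphase, hIm', ?_⟩
  -- bound the argument sum
  have b1 := Complex.arg_le_pi (jfac (M * N) z)
  have b1' := Complex.neg_pi_lt_arg (jfac (M * N) z)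
  have b2 := Complex.arg_le_pi (jfac M (moebius N z))
  have b2' := Complex.neg_pi_lt_arg (jfac M (moebius N z))
  have b3 := Complex.arg_le_pi (jfac N z)
  have b3' := Complex.neg_pi_lt_arg (jfac N z)
  have habs : |(n : ℝ) * (2 * Real.pi)| < 3 * Real.pi := by
    rw [hIm', argSum, abs_lt]; constructor <;> nlinarith
  have hpi0 : (0:ℝ) < Real.pi := Real.pi_pos
  have hn1 : |(n : ℝ)| < 3 / 2 := by
    rw [abs_mul] at habs
    have : |(2 * Real.pi)| = 2 * Real.pi := abs_of_pos (by positivity)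
    rw [this] at habs
    nlinarith [abs_nonneg (n:ℝ)]
  have : (n : ℝ) = -1 ∨ (n : ℝ) = 0 ∨ (n : ℝ) = 1 := by
    have h1 : -2 < (n:ℝ) := by rw [abs_lt] at hn1; linarith [hn1.1]
    have h2 : (n:ℝ) < 2 := by rw [abs_lt] at hn1; linarith [hn1.2]
    have h1' : (-2 : ℤ) < n := by exact_mod_cast h1
    have h2' : n < 2 := by exact_mod_cast h2
    interval_cases n <;> simp
  rcases this with h | h | h
  · left; exact_mod_cast h
  · right; left; exact_mod_cast h
  · right; right; exact_mod_cast h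

lemma continuousOn_arg_jfac (P : Matrix (Fin 2) (Fin 2) ℝ) :
    ContinuousOn (fun z => (jfac P z).arg) {z : ℂ | 0 < z.im} := by
  by_cases hc : P 1 0 = 0
  · simp only [jfac, hc, Complex.ofReal_zero, zero_mul, zero_add]
    exact continuousOn_const
  · intro z hz
    have hj : Continuous fun z : ℂ => jfac P z := by
      unfold jfac; continuity
    have hslit : jfac P z ∈ Complex.slitPlane := by
      rw [Complex.mem_slitPlane_iff]
      right
      rw [jfac_im]
      exact mul_ne_zero hc (ne_of_gt hz)
    exact ((Complex.continuousAt_arg hslit).comp hj.continuousAt).continuousWithinAt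

lemma continuousOn_argSum (M N : Matrix (Fin 2) (Fin 2) ℝ)
    (hM : M.det = 1) (hN : N.det = 1) :
    ContinuousOn (argSum M N) {z : ℂ | 0 < z.im} := by
  have hm : ContinuousOn (moebius N) {z : ℂ | 0 < z.im} := by
    intro z hz
    have hden : jfac N z ≠ 0 := jfac_ne_zero hN hz
    unfold moebius
    apply ContinuousWithinAt.div
    · exact (Continuous.continuousWithinAt (by continuity))
    · exact (Continuous.continuousWithinAt (by continuity))
    · exact hden
  have hmaps : Set.MapsTo (moebius N) {z : ℂ | 0 < z.im} {z : ℂ | 0 < z.im} :=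
    fun z hz => moebius_im_pos hN hz
  have h2 : ContinuousOn (fun z => (jfac M (moebius N z)).arg) {z : ℂ | 0 < z.im} :=
    (continuousOn_arg_jfac M).comp hm hmaps
  have h1 := continuousOn_arg_jfac (M * N)
  have h3 := continuousOn_arg_jfac N
  exact (h1.neg.add h2).add h3

/-- The phase factor `ω(M,N)` is independent of the point `z` in the upper
half-plane, and takes values only in `{-1, 0, 1}`. -/
theorem phaseFactor_indep_and_values (M N : Matrix (Fin 2) (Fin 2) ℝ)
    (hM : M.det = 1) (hN : N.det = 1) :
    (∀ z w : ℂ, 0 < z.im → 0 < w.im → phaseFactor M N z = phaseFactor M N w) ∧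
    (∀ z : ℂ, 0 < z.im →
      phaseFactor M N z = -1 ∨ phaseFactor M N z = 0 ∨ phaseFactor M N z = 1) := by
  constructor
  · intro z w hz hw
    obtain ⟨n, hn, hn2, hn3⟩ := phase_exists_int M N hM hN hz
    obtain ⟨m, hm, hm2, hm3⟩ := phase_exists_int M N hM hN hw
    -- show argSum M N z = argSum M N w by connectedness
    have hpre : IsPreconnected {z : ℂ | 0 < z.im} := (convex_halfSpace_im_gt 0).isPreconnected
    have hcont := continuousOn_argSum M N hM hN
    have himg : IsPreconnected (argSum M N '' {z : ℂ | 0 < z.im}) :=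
      hpre.image _ hcont
    have hfin : (argSum M N '' {z : ℂ | 0 < z.im}).Finite := by
      apply Set.Finite.subset (Set.toFinite ({-(2*Real.pi), 0, 2*Real.pi} : Set ℝ))
      rintro x ⟨u, hu, rfl⟩
      obtain ⟨k, _, hk2, hk3⟩ := phase_exists_int M N hM hN hu
      rcases hk3 with h | h | h <;> subst h <;> rw [← hk2] <;> push_cast <;>
        norm_num [Set.mem_insert_iff]
    have heq : argSum M N z = argSum M N w := by
      by_contra hne
      rcases lt_or_gt_of_ne hne with h | h
      · have := himg.Icc_subset ⟨z, hz, rfl⟩ ⟨w, hw, rfl⟩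
        exact ((Set.Icc_infinite h).mono this) hfin
      · have := himg.Icc_subset ⟨w, hw, rfl⟩ ⟨z, hz, rfl⟩
        exact ((Set.Icc_infinite h).mono this) hfin
    have hnm : (n : ℝ) = (m : ℝ) := by
      have hpi : (0:ℝ) < 2 * Real.pi := by positivity
      have := hn2.trans (heq.trans hm2.symm)
      exact mul_right_cancel₀ (ne_of_gt hpi) this
    rw [hn, hm]
    exact_mod_cast hnm
  · intro z hz
    obtain ⟨n, hn, _, hn3⟩ := phase_exists_int M N hM hN hz
    rcases hn3 with h | h | h <;> subst h <;> rw [hn] <;> push_cast <;> simp
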